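/- For H¹ Fourier coefficient sequences u, v on ℤ³\{0} and t > 0, the quantity ∑_{k≠0} e^{-|k|²t} |k|⁴ (∑_{(m,n)∈N_k} |u_n||v_m|)² is bounded by (C/t^{3/2}) ‖u‖²_{H¹} ‖v‖²_{H¹}, where N_k = {(m,n) : m+n=k, |m|≥|k|, |n|≥|k|, m,n≠0} and ‖u‖²_{H¹} = ∑ |k|²|u_k|². -/

import Mathlib

open Real

set_option maxHeartbeats 2000000

noncomputable def nrm (k : Fin 3 → ℤ) : ℝ := Real.sqrt (∑ i, ((k i : ℝ))^2)

def Nset (k : Fin 3 → ℤ) : Set ((Fin 3 → ℤ) × (Fin 3 → ℤ)) :=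
  {p | p.1 ≠ 0 ∧ p.2 ≠ 0 ∧ p.1 + p.2 = k ∧ nrm k ≤ nrm p.1 ∧ nrm k ≤ nrm p.2}

lemma nrm_nonneg (k : Fin 3 → ℤ) : 0 ≤ nrm k := Real.sqrt_nonneg _

lemma nrm_sq (k : Fin 3 → ℤ) : (nrm k)^2 = ∑ i, ((k i : ℝ))^2 :=
  Real.sq_sqrt (by positivity)

lemma one_le_nrm {k : Fin 3 → ℤ} (hk : k ≠ 0) : 1 ≤ nrm k := by
  rw [show (1:ℝ) = Real.sqrt 1 by simp]
  apply Real.sqrt_le_sqrt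
  obtain ⟨i, hi⟩ : ∃ i, k i ≠ 0 := by
    by_contra h; push_neg at h; exact hk (funext h)
  calc (1:ℝ) ≤ ((k i : ℝ))^2 := by
        have h1 : 1 ≤ |(k i : ℝ)| := by
          rw [← Int.cast_abs]; exact_mod_cast Int.one_le_abs (by omega)
        calc (1:ℝ) = 1^2 := by norm_num
          _ ≤ |(k i:ℝ)|^2 := by
              apply pow_le_pow_left₀ (by norm_num) h1
          _ = ((k i:ℝ))^2 := sq_abs _
    _ ≤ ∑ j, ((k j : ℝ))^2 :=
        Finset.single_le_sum (f := fun j => ((k j : ℝ))^2)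
          (fun j _ => sq_nonneg _) (Finset.mem_univ i)

lemma gauss_summable {s : ℝ} (hs : 0 < s) :
    Summable (fun n : ℤ => Real.exp (-(n:ℝ)^2 * s)) := by
  have hr : Real.exp (-s) < 1 := Real.exp_lt_one_iff.mpr (by linarith)
  have hr0 : 0 ≤ Real.exp (-s) := (Real.exp_pos _).le
  have hgeo : Summable (fun n : ℕ => Real.exp (-s) ^ n) :=
    summable_geometric_of_lt_one hr0 hr
  have key : ∀ n : ℤ, Real.exp (-(n:ℝ)^2 * s) ≤ Real.exp (-s) ^ n.natAbs := by
    intro n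
    rw [← Real.exp_nat_mul]
    apply Real.exp_le_exp.mpr
    have heq : ((n.natAbs:ℝ))^2 = (n:ℝ)^2 := by
      rw [Nat.cast_natAbs]; push_cast; rw [sq_abs]
    have h1 : (n.natAbs:ℝ) ≤ ((n.natAbs:ℝ))^2 := by
      exact_mod_cast Nat.le_self_pow two_ne_zero n.natAbs
    nlinarith
  apply Summable.of_nonneg_of_le (fun n => (Real.exp_pos _).le) key
  apply Summable.of_nat_of_neg_add_one
  · exact hgeo.congr (fun n => by simp)
  · exact ((summable_nat_add_iff 1).mpr hgeo).congr
      (fun n => by rw [show ((-((n:ℤ)+1)).natAbs) = n+1 from by omega])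

lemma theta_le {w : ℝ} (hw : 0 < w) :
    (∑' n : ℤ, Real.exp (-(n:ℝ)^2 * w)) ≤ 1 + 2 / w := by
  have hr : Real.exp (-w) < 1 := Real.exp_lt_one_iff.mpr (by linarith)
  have hr0 : 0 ≤ Real.exp (-w) := (Real.exp_pos _).le
  have hpos : 0 < 1 - Real.exp (-w) := by linarith
  have hgeo : Summable (fun n : ℕ => Real.exp (-w) ^ n) :=
    summable_geometric_of_lt_one hr0 hr
  have key : ∀ n : ℤ, Real.exp (-(n:ℝ)^2 * w) ≤ Real.exp (-w) ^ n.natAbs := by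
    intro n
    rw [← Real.exp_nat_mul]
    apply Real.exp_le_exp.mpr
    have heq : ((n.natAbs:ℝ))^2 = (n:ℝ)^2 := by
      rw [Nat.cast_natAbs]; push_cast; rw [sq_abs]
    have h1 : (n.natAbs:ℝ) ≤ ((n.natAbs:ℝ))^2 := by
      exact_mod_cast Nat.le_self_pow two_ne_zero n.natAbs
    nlinarith
  have hr4 : Real.exp (-w) * (w + 1) ≤ 1 := by
    have h2 : w + 1 ≤ Real.exp w := Real.add_one_le_exp w
    have h3 : Real.exp (-w) * Real.exp w = 1 := by rw [← Real.exp_add]; simp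
    nlinarith [Real.exp_pos (-w)]
  have keynat : ∀ n : ℕ, Real.exp (-(((n:ℤ)):ℝ)^2 * w) ≤ Real.exp (-w) ^ n := by
    intro n
    have := key (n:ℤ)
    rwa [show ((n:ℤ).natAbs) = n from by omega] at this
  have keyneg : ∀ n : ℕ,
      Real.exp (-(((-((n:ℤ)+1)):ℤ):ℝ)^2 * w) ≤ Real.exp (-w) ^ (n+1) := by
    intro n
    have := key (-((n:ℤ)+1))
    rwa [show ((-((n:ℤ)+1)).natAbs) = n+1 from by omega] at this
  have hnat : Summable (fun n : ℕ => Real.exp (-(((n:ℤ)):ℝ)^2 * w)) :=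
    Summable.of_nonneg_of_le (fun n => (Real.exp_pos _).le) keynat hgeo
  have hneg : Summable (fun n : ℕ => Real.exp (-(((-((n:ℤ)+1)):ℤ):ℝ)^2 * w)) :=
    Summable.of_nonneg_of_le (fun n => (Real.exp_pos _).le) keyneg
      ((summable_nat_add_iff 1).mpr hgeo)
  rw [tsum_of_nat_of_neg_add_one (f := fun n : ℤ => Real.exp (-(n:ℝ)^2 * w)) hnat hneg]
  have bnat : (∑' n : ℕ, Real.exp (-(((n:ℤ)):ℝ)^2 * w)) ≤ 1 + 1 / w := by
    have h1 := Summable.tsum_le_tsum keynat hnat hgeo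
    rw [tsum_geometric_of_lt_one hr0 hr] at h1
    refine h1.trans ?_
    rw [inv_eq_one_div, div_le_iff₀ hpos]
    have hx : 0 < 1/w := by positivity
    have hA : (1/w) * (Real.exp (-w) * (w+1)) ≤ (1/w) * 1 :=
      mul_le_mul_of_nonneg_left hr4 hx.le
    have hB : (1/w) * w = 1 := by field_simp
    nlinarith [hA, hB, Real.exp_pos (-w)]
  have bneg : (∑' n : ℕ, Real.exp (-(((-((n:ℤ)+1)):ℤ):ℝ)^2 * w)) ≤ 1 / w := by
    have h1 := Summable.tsum_le_tsum keyneg hneg ((summable_nat_add_iff 1).mpr hgeo)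
    refine h1.trans ?_
    have h2 : (∑' n : ℕ, Real.exp (-w) ^ (n+1))
        = Real.exp (-w) * ∑' n : ℕ, Real.exp (-w) ^ n := by
      rw [← tsum_mul_left]; congr 1; funext n; ring
    rw [h2, tsum_geometric_of_lt_one hr0 hr]
    rw [inv_eq_one_div, mul_one_div, div_le_div_iff₀ hpos hw]
    nlinarith [hr4]
  calc _ ≤ (1 + 1/w) + 1/w := add_le_add bnat bneg
    _ = 1 + 2/w := by ring

def e3 : (Fin 3 → ℤ) ≃ ℤ × ℤ × ℤ where
  toFun k := (k 0, k 1, k 2)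
  invFun p := ![p.1, p.2.1, p.2.2]
  left_inv k := by funext i; fin_cases i <;> rfl
  right_inv p := rfl

lemma hasSum3 {t : ℝ} (ht : 0 < t) :
    HasSum (fun k : Fin 3 → ℤ => Real.exp (-(nrm k)^2 * t))
      ((∑' n : ℤ, Real.exp (-(n:ℝ)^2 * t))^3) := by
  set g : ℤ → ℝ := fun n => Real.exp (-(n:ℝ)^2 * t) with hg
  have hgs : Summable g := gauss_summable ht
  have hgnn : ∀ n, 0 ≤ g n := fun n => (Real.exp_pos _).le
  have h2s : Summable (fun p : ℤ × ℤ => g p.1 * g p.2) :=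
    hgs.mul_of_nonneg hgs hgnn hgnn
  have h2 : HasSum (fun p : ℤ × ℤ => g p.1 * g p.2) ((∑' n, g n) * (∑' n, g n)) :=
    hgs.hasSum.mul hgs.hasSum h2s
  have h3s : Summable (fun p : ℤ × (ℤ × ℤ) => g p.1 * (g p.2.1 * g p.2.2)) :=
    hgs.mul_of_nonneg h2s hgnn (fun p => mul_nonneg (hgnn _) (hgnn _))
  have h3 : HasSum (fun p : ℤ × (ℤ × ℤ) => g p.1 * (g p.2.1 * g p.2.2))
      ((∑' n, g n) * ((∑' n, g n) * (∑' n, g n))) :=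
    hgs.hasSum.mul h2 h3s
  have key : (fun p : ℤ × (ℤ × ℤ) => g p.1 * (g p.2.1 * g p.2.2)) ∘ e3
      = fun k : Fin 3 → ℤ => Real.exp (-(nrm k)^2 * t) := by
    funext k
    simp only [Function.comp_apply, show e3 k = (k 0, k 1, k 2) from rfl, hg]
    rw [← Real.exp_add, ← Real.exp_add, nrm_sq, Fin.sum_univ_three]
    congr 1; ring
  have := (e3.hasSum_iff
    (f := fun p : ℤ × (ℤ × ℤ) => g p.1 * (g p.2.1 * g p.2.2))).mpr h3
  rw [key] at this
  convert this using 1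
  ring

lemma S_le {s : ℝ} (hs : 0 < s) :
    (∑' n : ℤ, Real.exp (-(n:ℝ)^2 * s))
      ≤ (π / s) ^ ((1:ℝ)/2) * (1 + 2 * s / π^2) := by
  have hπ := Real.pi_pos
  have ha : 0 < s / π := by positivity
  have hfe := Real.tsum_exp_neg_mul_int_sq ha
  have h1 : (fun n : ℤ => Real.exp (-π * (s/π) * (n:ℝ)^2))
      = fun n : ℤ => Real.exp (-(n:ℝ)^2 * s) := by
    funext n; congr 1; field_simp
  have h2 : (fun n : ℤ => Real.exp (-π / (s/π) * (n:ℝ)^2))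
      = fun n : ℤ => Real.exp (-(n:ℝ)^2 * (π^2/s)) := by
    funext n; congr 1; field_simp
  rw [h1, h2] at hfe
  rw [hfe]
  have hb : (∑' n : ℤ, Real.exp (-(n:ℝ)^2 * (π^2/s))) ≤ 1 + 2 * s / π^2 := by
    have := theta_le (w := π^2/s) (by positivity)
    refine this.trans (le_of_eq ?_)
    congr 1
    field_simp
  have hge : (0:ℝ) ≤ 1 / (s/π) ^ ((1:ℝ)/2) := by positivity
  calc 1 / (s/π) ^ ((1:ℝ)/2) * (∑' n : ℤ, Real.exp (-(n:ℝ)^2 * (π^2/s)))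
      ≤ 1 / (s/π) ^ ((1:ℝ)/2) * (1 + 2 * s / π^2) := by
        apply mul_le_mul_of_nonneg_left hb hge
    _ = (π / s) ^ ((1:ℝ)/2) * (1 + 2 * s / π^2) := by
        congr 1
        rw [show π/s = (s/π)⁻¹ by field_simp, Real.inv_rpow ha.le, one_div]

lemma theta3 {t : ℝ} (ht : 0 < t) :
    (∑' k : {k : Fin 3 → ℤ // k ≠ 0}, Real.exp (-(nrm k.1)^2 * t))
      ≤ (216 * (2*π)^((3:ℝ)/2)) / t^((3:ℝ)/2) := by
  have hπ := Real.pi_pos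
  have ht2 : 0 < t/2 := by linarith
  have hS2 := hasSum3 ht2
  have hsum2 : Summable (fun k : Fin 3 → ℤ => Real.exp (-(nrm k)^2 * (t/2))) :=
    hS2.summable
  set S2 : ℝ := ∑' n : ℤ, Real.exp (-(n:ℝ)^2 * (t/2)) with hS2def
  have step1 : (∑' k : {k : Fin 3 → ℤ // k ≠ 0}, Real.exp (-(nrm k.1)^2 * t))
      ≤ ∑' k : {k : Fin 3 → ℤ // k ≠ 0},
          Real.exp (-(t/2)) * Real.exp (-(nrm k.1)^2 * (t/2)) := by
    apply Summable.tsum_le_tsum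
    · rintro ⟨k, hk⟩
      rw [← Real.exp_add]
      apply Real.exp_le_exp.mpr
      have h1 : 1 ≤ (nrm k)^2 := by nlinarith [one_le_nrm hk, nrm_nonneg k]
      nlinarith
    · exact (hasSum3 ht).summable.subtype _
    · exact (hsum2.subtype _).mul_left _
  refine step1.trans ?_
  rw [tsum_mul_left]
  have step2 : (∑' k : {k : Fin 3 → ℤ // k ≠ 0}, Real.exp (-(nrm k.1)^2 * (t/2)))
      ≤ S2^3 := by
    rw [← hS2.tsum_eq]
    exact Summable.tsum_subtype_le (fun k : Fin 3 → ℤ => Real.exp (-(nrm k)^2 * (t/2))) _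
      (fun k => (Real.exp_pos _).le) hsum2
  have hSnn : 0 ≤ S2 := tsum_nonneg (fun n => (Real.exp_pos _).le)
  have step3 : S2^3 ≤ ((π / (t/2)) ^ ((1:ℝ)/2) * (1 + 2 * (t/2) / π^2))^3 :=
    pow_le_pow_left₀ hSnn (S_le ht2) 3
  have chain : Real.exp (-(t/2)) *
      (∑' k : {k : Fin 3 → ℤ // k ≠ 0}, Real.exp (-(nrm k.1)^2 * (t/2)))
      ≤ Real.exp (-(t/2)) * (((π / (t/2)) ^ ((1:ℝ)/2) * (1 + 2 * (t/2) / π^2))^3) :=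
    mul_le_mul_of_nonneg_left (step2.trans step3) (Real.exp_pos _).le
  refine chain.trans ?_
  have hx : (0:ℝ) < π / (t/2) := by positivity
  have hpow : ((π / (t/2)) ^ ((1:ℝ)/2))^3 = (2*π)^((3:ℝ)/2) / t^((3:ℝ)/2) := by
    rw [← Real.rpow_natCast ((π / (t/2)) ^ ((1:ℝ)/2)) 3, ← Real.rpow_mul hx.le]
    norm_num
    rw [show π / (t/2) = (2*π)/t by ring, Real.div_rpow (by positivity) ht.le]
  have h6 : 1 + 2 * (t/2) / π^2 ≤ 6 * Real.exp (t/6) := by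
    have ha : 2 * (t/2) / π^2 ≤ t := by
      rw [show 2*(t/2) = t by ring]
      rw [div_le_iff₀ (by positivity)]
      have h9 : (9:ℝ) ≤ π^2 := by nlinarith [Real.pi_gt_three]
      nlinarith [mul_le_mul_of_nonneg_left h9 ht.le]
    have hb : t/6 + 1 ≤ Real.exp (t/6) := Real.add_one_le_exp _
    nlinarith
  have hcube : (1 + 2 * (t/2) / π^2)^3 ≤ 216 * Real.exp (t/2) := by
    have hnn : (0:ℝ) ≤ 1 + 2 * (t/2) / π^2 := by positivity
    have := pow_le_pow_left₀ hnn h6 3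
    refine this.trans (le_of_eq ?_)
    rw [mul_pow, ← Real.exp_nat_mul]
    norm_num
    rw [show (3:ℝ) * (t/6) = t/2 by ring]
  have expand : Real.exp (-(t/2)) * (((π / (t/2)) ^ ((1:ℝ)/2) * (1 + 2 * (t/2) / π^2))^3)
      = (Real.exp (-(t/2)) * (1 + 2 * (t/2) / π^2)^3) * ((2*π)^((3:ℝ)/2) / t^((3:ℝ)/2)) := by
    rw [mul_pow, hpow]; ring
  rw [expand]
  have final : Real.exp (-(t/2)) * (1 + 2 * (t/2) / π^2)^3 ≤ 216 := by
    have := mul_le_mul_of_nonneg_left hcube (Real.exp_pos (-(t/2))).le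
    refine this.trans (le_of_eq ?_)
    rw [← mul_assoc, mul_comm (Real.exp (-(t/2))) 216, mul_assoc, ← Real.exp_add]
    norm_num
  have hfrac : (0:ℝ) ≤ (2*π)^((3:ℝ)/2) / t^((3:ℝ)/2) := by positivity
  calc (Real.exp (-(t/2)) * (1 + 2 * (t/2) / π^2)^3) * ((2*π)^((3:ℝ)/2) / t^((3:ℝ)/2))
      ≤ 216 * ((2*π)^((3:ℝ)/2) / t^((3:ℝ)/2)) := mul_le_mul_of_nonneg_right final hfrac
    _ = 216 * (2*π)^((3:ℝ)/2) / t^((3:ℝ)/2) := by ring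

lemma inner_le (u v : (Fin 3 → ℤ) → ℂ)
    (hu : Summable (fun n : Fin 3 → ℤ => (nrm n)^2 * ‖u n‖^2))
    (hv : Summable (fun m : Fin 3 → ℤ => (nrm m)^2 * ‖v m‖^2))
    {k : Fin 3 → ℤ} (hk : k ≠ 0) :
    (∑' p : Nset k, ‖u p.1.2‖ * ‖v p.1.1‖)
      ≤ Real.sqrt (∑' n : Fin 3 → ℤ, (nrm n)^2 * ‖u n‖^2) *
        Real.sqrt (∑' m : Fin 3 → ℤ, (nrm m)^2 * ‖v m‖^2) / (nrm k)^2 := by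
  set f : (Fin 3 → ℤ) → ℝ := fun n => nrm n * ‖u n‖ with hf
  set g : (Fin 3 → ℤ) → ℝ := fun m => nrm m * ‖v m‖ with hg
  have hfnn : ∀ n, 0 ≤ f n := fun n => mul_nonneg (nrm_nonneg n) (norm_nonneg _)
  have hgnn : ∀ n, 0 ≤ g n := fun n => mul_nonneg (nrm_nonneg n) (norm_nonneg _)
  have hf2 : Summable (fun n => (f n)^2) := hu.congr (fun n => by rw [hf]; ring)
  have hg2 : Summable (fun n => (g n)^2) := hv.congr (fun n => by rw [hg]; ring)
  have hg2s : Summable (fun n : Fin 3 → ℤ => (g (k - n))^2) :=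
    hg2.comp_injective (Equiv.subLeft k).injective
  have hK : (0:ℝ) < (nrm k)^2 := by nlinarith [one_le_nrm hk]
  have hK1 : (1:ℝ) ≤ (nrm k)^2 := by nlinarith [one_le_nrm hk]
  set A := ∑' n : Fin 3 → ℤ, (nrm n)^2 * ‖u n‖^2 with hA
  set B := ∑' m : Fin 3 → ℤ, (nrm m)^2 * ‖v m‖^2 with hB
  have hAnn : 0 ≤ A := tsum_nonneg (fun n => by positivity)
  have hBnn : 0 ≤ B := tsum_nonneg (fun n => by positivity)
  have hA2 : ∀ s : Finset (Fin 3 → ℤ), ∑ n ∈ s, (f n)^2 ≤ A := fun s =>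
    (Summable.sum_le_tsum s (fun n _ => sq_nonneg _) hf2).trans
      (le_of_eq (tsum_congr (fun n => by rw [hf]; ring)))
  have hgtsum : (∑' n : Fin 3 → ℤ, (g (k - n))^2) = B := by
    have := (Equiv.subLeft k).tsum_eq (fun m => (g m)^2)
    simp only [Equiv.subLeft_apply] at this
    rw [this]
    exact tsum_congr (fun m => by rw [hg]; ring)
  have hB2 : ∀ s : Finset (Fin 3 → ℤ), ∑ n ∈ s, (g (k - n))^2 ≤ B := fun s =>
    (Summable.sum_le_tsum s (fun n _ => sq_nonneg _) hg2s).trans (le_of_eq hgtsum)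
  set H : (Fin 3 → ℤ) → ℝ := fun n => f n * g (k - n) / (nrm k)^2 with hH
  have hHnn : ∀ n, 0 ≤ H n := fun n => by
    apply div_nonneg (mul_nonneg (hfnn n) (hgnn _)) hK.le
  have hHsummable : Summable H := by
    refine Summable.of_nonneg_of_le hHnn (fun n => ?_) ((hf2.add hg2s).div_const 2)
    have h1 : H n ≤ f n * g (k - n) :=
      div_le_self (mul_nonneg (hfnn n) (hgnn _)) hK1
    refine h1.trans ?_
    nlinarith [sq_nonneg (f n - g (k - n))]
  have hCS : ∀ s : Finset (Fin 3 → ℤ),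
      ∑ n ∈ s, H n ≤ Real.sqrt A * Real.sqrt B / (nrm k)^2 := by
    intro s
    have h1 : (∑ n ∈ s, f n * g (k - n))^2
        ≤ (∑ n ∈ s, (f n)^2) * (∑ n ∈ s, (g (k - n))^2) :=
      Finset.sum_mul_sq_le_sq_mul_sq s f (fun n => g (k - n))
    have h2 : (∑ n ∈ s, f n * g (k - n))^2 ≤ A * B :=
      h1.trans (mul_le_mul (hA2 s) (hB2 s)
        (Finset.sum_nonneg (fun n _ => sq_nonneg _)) hAnn)
    have h3 : ∑ n ∈ s, f n * g (k - n) ≤ Real.sqrt A * Real.sqrt B := by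
      have hnn : 0 ≤ ∑ n ∈ s, f n * g (k - n) :=
        Finset.sum_nonneg (fun n _ => mul_nonneg (hfnn n) (hgnn _))
      rw [← Real.sqrt_mul hAnn]
      exact (Real.le_sqrt hnn (mul_nonneg hAnn hBnn)).mpr h2
    have h4 : (∑ n ∈ s, H n) = (∑ n ∈ s, f n * g (k - n)) / (nrm k)^2 := by
      rw [Finset.sum_div]
    rw [h4]
    exact (div_le_div_iff_of_pos_right hK).mpr h3
  have hHbound : (∑' n, H n) ≤ Real.sqrt A * Real.sqrt B / (nrm k)^2 :=
    Summable.tsum_le_of_sum_le hHsummable hCS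
  have hinj : Function.Injective (fun p : Nset k => p.1.2) := by
    intro p q h
    simp only at h
    obtain ⟨-, -, hsum, -, -⟩ := p.2
    obtain ⟨-, -, hsum', -, -⟩ := q.2
    apply Subtype.ext
    have hm : p.1.1 = q.1.1 := by
      have h2 := hsum.trans hsum'.symm
      rw [h] at h2
      exact add_right_cancel h2
    exact Prod.ext hm h
  have hterm : ∀ p : Nset k, ‖u p.1.2‖ * ‖v p.1.1‖ ≤ H p.1.2 := by
    rintro ⟨⟨m, n⟩, hm0, hn0, hsum, hm, hn⟩
    simp only [hH, hf, hg]
    have hkm : k - n = m := by rw [← hsum]; abel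
    rw [hkm, le_div_iff₀ hK]
    have h5 : (nrm k)^2 ≤ nrm n * nrm m := by
      have := mul_le_mul hn hm (nrm_nonneg k) (nrm_nonneg n)
      nlinarith
    nlinarith [norm_nonneg (u n), norm_nonneg (v m), nrm_nonneg n, nrm_nonneg m,
      mul_nonneg (norm_nonneg (u n)) (norm_nonneg (v m))]
  have hsub : Summable (fun p : Nset k => ‖u p.1.2‖ * ‖v p.1.1‖) := by
    apply Summable.of_nonneg_of_le
      (fun p => mul_nonneg (norm_nonneg _) (norm_nonneg _)) hterm
    exact hHsummable.comp_injective hinj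
  calc (∑' p : Nset k, ‖u p.1.2‖ * ‖v p.1.1‖) ≤ ∑' n, H n :=
        Summable.tsum_le_tsum_of_inj _ hinj (fun c _ => hHnn c) hterm hsub hHsummable
    _ ≤ Real.sqrt A * Real.sqrt B / (nrm k)^2 := hHbound

theorem stmt6 : ∃ C : ℝ, 0 < C ∧ ∀ (u v : (Fin 3 → ℤ) → ℂ),
    Summable (fun n : Fin 3 → ℤ => (nrm n)^2 * ‖u n‖^2) →
    Summable (fun m : Fin 3 → ℤ => (nrm m)^2 * ‖v m‖^2) →
    ∀ t : ℝ, 0 < t →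
    ∑' k : {k : Fin 3 → ℤ // k ≠ 0},
        Real.exp (-(nrm k.1)^2 * t) * (nrm k.1)^4 *
          (∑' p : Nset k.1, ‖u p.1.2‖ * ‖v p.1.1‖)^2 ≤
      (C / t ^ ((3:ℝ)/2)) * (∑' n : Fin 3 → ℤ, (nrm n)^2 * ‖u n‖^2) *
        (∑' m : Fin 3 → ℤ, (nrm m)^2 * ‖v m‖^2) := by
  refine ⟨216 * (2*π)^((3:ℝ)/2), by positivity, ?_⟩
  intro u v hu hv t ht
  set A := ∑' n : Fin 3 → ℤ, (nrm n)^2 * ‖u n‖^2 with hA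
  set B := ∑' m : Fin 3 → ℤ, (nrm m)^2 * ‖v m‖^2 with hB
  have hAnn : 0 ≤ A := tsum_nonneg (fun n => by positivity)
  have hBnn : 0 ≤ B := tsum_nonneg (fun n => by positivity)
  have key : ∀ k : {k : Fin 3 → ℤ // k ≠ 0},
      Real.exp (-(nrm k.1)^2 * t) * (nrm k.1)^4 *
        (∑' p : Nset k.1, ‖u p.1.2‖ * ‖v p.1.1‖)^2
      ≤ Real.exp (-(nrm k.1)^2 * t) * (A * B) := by
    rintro ⟨k, hk⟩
    have hK : (0:ℝ) < (nrm k)^2 := by nlinarith [one_le_nrm hk]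
    have hI0 : 0 ≤ ∑' p : Nset k, ‖u p.1.2‖ * ‖v p.1.1‖ :=
      tsum_nonneg (fun p => mul_nonneg (norm_nonneg _) (norm_nonneg _))
    have hIle := inner_le u v hu hv hk
    have hsq : (∑' p : Nset k, ‖u p.1.2‖ * ‖v p.1.1‖)^2
        ≤ (Real.sqrt A * Real.sqrt B / (nrm k)^2)^2 :=
      pow_le_pow_left₀ hI0 hIle 2
    have heq : (Real.sqrt A * Real.sqrt B / (nrm k)^2)^2 = A * B / (nrm k)^4 := by
      rw [div_pow, mul_pow, Real.sq_sqrt hAnn, Real.sq_sqrt hBnn]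
      congr 1
      ring
    rw [heq] at hsq
    have h4 : (0:ℝ) < (nrm k)^4 := by nlinarith [hK]
    calc Real.exp (-(nrm k)^2 * t) * (nrm k)^4 *
          (∑' p : Nset k, ‖u p.1.2‖ * ‖v p.1.1‖)^2
        ≤ Real.exp (-(nrm k)^2 * t) * (nrm k)^4 * (A * B / (nrm k)^4) := by
          apply mul_le_mul_of_nonneg_left hsq
          positivity
      _ = Real.exp (-(nrm k)^2 * t) * (A * B) := by
          have hn0 : nrm k ≠ 0 := (lt_of_lt_of_le one_pos (one_le_nrm hk)).ne'
          field_simp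
  have hmaj : Summable (fun k : {k : Fin 3 → ℤ // k ≠ 0} =>
      Real.exp (-(nrm k.1)^2 * t) * (A * B)) :=
    (((hasSum3 ht).summable).subtype _).mul_right _
  have hLHS : Summable (fun k : {k : Fin 3 → ℤ // k ≠ 0} =>
      Real.exp (-(nrm k.1)^2 * t) * (nrm k.1)^4 *
        (∑' p : Nset k.1, ‖u p.1.2‖ * ‖v p.1.1‖)^2) := by
    refine Summable.of_nonneg_of_le (fun k => ?_) key hmaj
    have := nrm_nonneg k.1
    positivity
  calc ∑' k : {k : Fin 3 → ℤ // k ≠ 0},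
        Real.exp (-(nrm k.1)^2 * t) * (nrm k.1)^4 *
          (∑' p : Nset k.1, ‖u p.1.2‖ * ‖v p.1.1‖)^2
      ≤ ∑' k : {k : Fin 3 → ℤ // k ≠ 0}, Real.exp (-(nrm k.1)^2 * t) * (A * B) :=
        Summable.tsum_le_tsum key hLHS hmaj
    _ = (∑' k : {k : Fin 3 → ℤ // k ≠ 0}, Real.exp (-(nrm k.1)^2 * t)) * (A * B) :=
        tsum_mul_right
    _ ≤ ((216 * (2*π)^((3:ℝ)/2)) / t^((3:ℝ)/2)) * (A * B) :=
        mul_le_mul_of_nonneg_right (theta3 ht) (mul_nonneg hAnn hBnn)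
    _ = ((216 * (2*π)^((3:ℝ)/2)) / t^((3:ℝ)/2)) * A * B := by ring
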